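/- arXiv:2411.03689 — 5 statements merged into one kernel-verified Lean document; each statement's English description precedes it below -/
import Mathlib

section
/- Let u : ℝ → E solve u'(t) + A u(t) + N(u(t)) = F in a finite-dimensional inner product space E, where A is a bounded linear operator satisfying ⟪A x, x⟫ ≥ ℓ₀‖x‖² for some ℓ₀ > 0, N satisfies ⟪N(x), x⟫ = 0 for all x, and ‖F(t)‖ ≤ M for all t. Then ‖u(t)‖² ≤ e^{-ℓ₀ t}‖u(0)‖² + (M²/ℓ₀²)(1 - e^{-ℓ₀ t}) for all t ≥ 0. -/
/-!
Differentiating the energy `‖u‖²` along the flow, the nonlinear term drops out, coercivity of `A`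
contributes `-2ℓ₀‖u‖²`, and Young's inequality `2⟪F, u⟫ ≤ M²/ℓ₀ + ℓ₀‖u‖²` absorbs the forcing.
So `y = ‖u‖²` satisfies `y' ≤ -ℓ₀ y + M²/ℓ₀`, and Grönwall's inequality with the negative rate
`-ℓ₀` gives the bound.
-/

open Real

theorem le_gronwallBound_of_hasDerivAt {f f' : ℝ → ℝ} {K ε a : ℝ}
    (hf : ∀ x, HasDerivAt f (f' x) x) (bound : ∀ x, f' x ≤ K * f x + ε) :
    ∀ x, a ≤ x → f x ≤ gronwallBound (f a) K ε (x - a) := fun x hx =>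
  le_gronwallBound_of_liminf_deriv_right_le (b := x)
    (fun y _ => (hf y).continuousAt.continuousWithinAt)
    (fun y _ _ hr => (hf y).hasDerivWithinAt.liminf_right_slope_le hr)
    le_rfl (fun y _ => bound y) x ⟨hx, le_rfl⟩

theorem gronwallBound_neg {ℓ : ℝ} (hℓ : ℓ ≠ 0) (δ ε x : ℝ) :
    gronwallBound δ (-ℓ) ε x = exp (-ℓ * x) * δ + ε / ℓ * (1 - exp (-ℓ * x)) := by
  rw [gronwallBound_of_K_ne_0 (neg_ne_zero.mpr hℓ), div_neg]
  ring

theorem two_mul_le_sq_div_add {ℓ : ℝ} (hℓ : 0 < ℓ) (a b : ℝ) :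
    2 * (a * b) ≤ a ^ 2 / ℓ + ℓ * b ^ 2 := by
  rw [div_add' _ _ _ hℓ.ne', le_div_iff₀ hℓ]
  nlinarith [sq_nonneg (a - ℓ * b)]

theorem two_mul_inner_le_of_add_add_eq {E : Type*} [NormedAddCommGroup E]
    [InnerProductSpace ℝ E] {ℓ₀ M : ℝ} (hℓ₀ : 0 < ℓ₀) {x v a n f : E}
    (ha : ℓ₀ * ‖x‖ ^ 2 ≤ inner ℝ a x) (hn : inner ℝ n x = 0) (hf : ‖f‖ ≤ M)
    (h : v + a + n = f) :
    2 * inner ℝ x v ≤ -ℓ₀ * ‖x‖ ^ 2 + M ^ 2 / ℓ₀ := by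
  have hv : inner ℝ x v = inner ℝ f x - inner ℝ a x := by
    rw [← h, real_inner_comm, inner_add_left, inner_add_left, hn]
    ring
  have hfx : inner ℝ f x ≤ M * ‖x‖ :=
    (real_inner_le_norm f x).trans (mul_le_mul_of_nonneg_right hf (norm_nonneg x))
  linarith [two_mul_le_sq_div_add hℓ₀ M ‖x‖]

theorem stmt_1_general {E : Type*} [NormedAddCommGroup E] [InnerProductSpace ℝ E]
    (A : E →L[ℝ] E) (ℓ₀ : ℝ) (hℓ₀ : 0 < ℓ₀)
    (hA : ∀ x : E, ℓ₀ * ‖x‖ ^ 2 ≤ (inner ℝ (A x) x : ℝ))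
    (N : E → E) (hN : ∀ x : E, (inner ℝ (N x) x : ℝ) = 0)
    (F : ℝ → E) (M : ℝ) (hF : ∀ t : ℝ, ‖F t‖ ≤ M)
    (u u' : ℝ → E) (hu : ∀ t : ℝ, HasDerivAt u (u' t) t)
    (heq : ∀ t : ℝ, u' t + A (u t) + N (u t) = F t) :
    ∀ t : ℝ, 0 ≤ t →
      ‖u t‖ ^ 2 ≤ Real.exp (-ℓ₀ * t) * ‖u 0‖ ^ 2 +
        (M ^ 2 / ℓ₀ ^ 2) * (1 - Real.exp (-ℓ₀ * t)) := by
  intro t ht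
  have hbound := le_gronwallBound_of_hasDerivAt (fun s => (hu s).norm_sq)
    (fun s => two_mul_inner_le_of_add_add_eq hℓ₀ (hA (u s)) (hN (u s)) (hF s) (heq s)) t ht
  rwa [sub_zero, gronwallBound_neg hℓ₀.ne', div_div, ← sq] at hbound

theorem stmt_1 {E : Type*} [NormedAddCommGroup E] [InnerProductSpace ℝ E]
    [FiniteDimensional ℝ E]
    (A : E →L[ℝ] E) (ℓ₀ : ℝ) (hℓ₀ : 0 < ℓ₀)
    (hA : ∀ x : E, ℓ₀ * ‖x‖ ^ 2 ≤ (inner ℝ (A x) x : ℝ))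
    (N : E → E) (hN : ∀ x : E, (inner ℝ (N x) x : ℝ) = 0)
    (F : ℝ → E) (M : ℝ) (hF : ∀ t : ℝ, ‖F t‖ ≤ M)
    (u u' : ℝ → E) (hu : ∀ t : ℝ, HasDerivAt u (u' t) t)
    (heq : ∀ t : ℝ, u' t + A (u t) + N (u t) = F t) :
    ∀ t : ℝ, 0 ≤ t →
      ‖u t‖ ^ 2 ≤ Real.exp (-ℓ₀ * t) * ‖u 0‖ ^ 2 +
        (M ^ 2 / ℓ₀ ^ 2) * (1 - Real.exp (-ℓ₀ * t)) :=
  stmt_1_general A ℓ₀ hℓ₀ hA N hN F M hF u u' hu heq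
end

section
/- Let (u, q) : ℝ → E × ℝ solve the augmented system u' + A u + q N(u) = F, q' - ⟪N(u), u⟫ = -γ q + γ, with A coercive with constant ℓ₀ > 0, ⟪N(x), x⟫ = 0 for all x, ‖F(t)‖ ≤ M, and γ > 0. Setting E(t) = ‖u(t)‖² + q(t)² and α = min(ℓ₀, γ), one has E(t) ≤ e^{-α t} E(0) + (1/α)((M²/ℓ₀) + γ)(1 - e^{-α t}) for all t ≥ 0. -/
/-!
Along a solution the energy `‖u‖² + q²` satisfies `E' = 2⟪F - A u, u⟫ + 2γ q (1 - q)`, the terms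
`q N(u)` and `⟪N(u), u⟫` cancelling. Coercivity with Young's inequality gives
`2⟪F - A u, u⟫ ≤ -ℓ₀‖u‖² + M²/ℓ₀`, and `2q(1 - q) ≤ 1 - q²`, so `E' ≤ -α E + M²/ℓ₀ + γ`;
Grönwall's inequality then yields the bound.
-/

open Real
open scoped RealInnerProductSpace

theorem le_exp_neg_mul_add_of_hasDerivAt_le {φ φ' : ℝ → ℝ} {α C : ℝ} (hα : α ≠ 0)
    (hφ : ∀ s, HasDerivAt φ (φ' s) s) (bound : ∀ s, φ' s ≤ -α * φ s + C) {t : ℝ} (ht : 0 ≤ t) :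
    φ t ≤ exp (-α * t) * φ 0 + 1 / α * C * (1 - exp (-α * t)) := by
  have h := le_gronwallBound_of_liminf_deriv_right_le (f := φ) (a := 0) (b := t)
    (fun s _ => (hφ s).continuousAt.continuousWithinAt)
    (fun s _ _ hr => (hφ s).hasDerivWithinAt.liminf_right_slope_le hr) le_rfl
    (fun s _ => bound s) t ⟨ht, le_rfl⟩
  rw [gronwallBound_of_K_ne_0 (neg_ne_zero.2 hα), sub_zero] at h
  convert h using 2
  field_simp
  ring

theorem two_mul_inner_sub_sub_smul_le {E : Type*} [NormedAddCommGroup E] [InnerProductSpace ℝ E]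
    {a n f x : E} {ℓ M : ℝ} (hℓ : 0 < ℓ) (ha : ℓ * ‖x‖ ^ 2 ≤ ⟪a, x⟫) (hn : ⟪n, x⟫ = 0)
    (hf : ‖f‖ ≤ M) (p : ℝ) :
    2 * ⟪f - a - p • n, x⟫ ≤ -ℓ * ‖x‖ ^ 2 + M ^ 2 / ℓ := by
  have hfx : ⟪f, x⟫ ≤ M * ‖x‖ :=
    (real_inner_le_norm f x).trans (mul_le_mul_of_nonneg_right hf (norm_nonneg x))
  have young : 2 * (M * ‖x‖) ≤ ℓ * ‖x‖ ^ 2 + M ^ 2 / ℓ := by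
    have : M ^ 2 / ℓ = (M - ℓ * ‖x‖) ^ 2 / ℓ + 2 * (M * ‖x‖) - ℓ * ‖x‖ ^ 2 := by
      field_simp; ring
    have : 0 ≤ (M - ℓ * ‖x‖) ^ 2 / ℓ := by positivity
    linarith
  rw [inner_sub_left, inner_sub_left, real_inner_smul_left, hn]
  linarith

theorem two_mul_mul_neg_mul_add_le {γ : ℝ} (hγ : 0 ≤ γ) (p : ℝ) :
    2 * p * (-γ * p + γ) ≤ -γ * p ^ 2 + γ := by
  nlinarith [mul_nonneg hγ (sq_nonneg (p - 1))]

theorem stmt_3_general {E : Type*} [NormedAddCommGroup E] [InnerProductSpace ℝ E]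
    (A : E →L[ℝ] E) (ℓ₀ : ℝ) (hℓ₀ : 0 < ℓ₀)
    (hA : ∀ x : E, ℓ₀ * ‖x‖ ^ 2 ≤ (inner ℝ (A x) x : ℝ))
    (N : E → E) (hN : ∀ x : E, (inner ℝ (N x) x : ℝ) = 0)
    (F : ℝ → E) (M : ℝ) (hF : ∀ t : ℝ, ‖F t‖ ≤ M)
    (γ : ℝ) (hγ : 0 < γ)
    (u u' : ℝ → E) (q q' : ℝ → ℝ)
    (hu : ∀ t : ℝ, HasDerivAt u (u' t) t)
    (hq : ∀ t : ℝ, HasDerivAt q (q' t) t)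
    (hequ : ∀ t : ℝ, u' t + A (u t) + q t • N (u t) = F t)
    (heqq : ∀ t : ℝ, q' t - (inner ℝ (N (u t)) (u t) : ℝ) = -γ * q t + γ) :
    ∀ t : ℝ, 0 ≤ t →
      ‖u t‖ ^ 2 + (q t) ^ 2 ≤
        Real.exp (-(min ℓ₀ γ) * t) * (‖u 0‖ ^ 2 + (q 0) ^ 2) +
          (1 / min ℓ₀ γ) * (M ^ 2 / ℓ₀ + γ) * (1 - Real.exp (-(min ℓ₀ γ) * t)) := by
  intro t ht
  refine le_exp_neg_mul_add_of_hasDerivAt_le (φ := fun s => ‖u s‖ ^ 2 + q s ^ 2)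
    (lt_min hℓ₀ hγ).ne' (fun s => (hu s).norm_sq.add ((hq s).pow 2)) (fun s => ?_) ht
  have hu' : u' s = F s - A (u s) - q s • N (u s) := by rw [← hequ s]; abel
  have hq' : q' s = -γ * q s + γ := by linarith [heqq s, hN (u s)]
  have hu_diss := two_mul_inner_sub_sub_smul_le hℓ₀ (hA (u s)) (hN (u s)) (hF s) (q s)
  have hq_diss := two_mul_mul_neg_mul_add_le hγ.le (q s)
  have hℓ₀_rate := mul_le_mul_of_nonneg_right (min_le_left ℓ₀ γ) (sq_nonneg ‖u s‖)
  have hγ_rate := mul_le_mul_of_nonneg_right (min_le_right ℓ₀ γ) (sq_nonneg (q s))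
  rw [real_inner_comm, hu', hq']
  norm_num only [Nat.cast_ofNat, pow_one]
  nlinarith

theorem stmt_3 {E : Type*} [NormedAddCommGroup E] [InnerProductSpace ℝ E]
    [FiniteDimensional ℝ E]
    (A : E →L[ℝ] E) (ℓ₀ : ℝ) (hℓ₀ : 0 < ℓ₀)
    (hA : ∀ x : E, ℓ₀ * ‖x‖ ^ 2 ≤ (inner ℝ (A x) x : ℝ))
    (N : E → E) (hN : ∀ x : E, (inner ℝ (N x) x : ℝ) = 0)
    (F : ℝ → E) (M : ℝ) (hF : ∀ t : ℝ, ‖F t‖ ≤ M)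
    (γ : ℝ) (hγ : 0 < γ)
    (u u' : ℝ → E) (q q' : ℝ → ℝ)
    (hu : ∀ t : ℝ, HasDerivAt u (u' t) t)
    (hq : ∀ t : ℝ, HasDerivAt q (q' t) t)
    (hequ : ∀ t : ℝ, u' t + A (u t) + q t • N (u t) = F t)
    (heqq : ∀ t : ℝ, q' t - (inner ℝ (N (u t)) (u t) : ℝ) = -γ * q t + γ) :
    ∀ t : ℝ, 0 ≤ t →
      ‖u t‖ ^ 2 + (q t) ^ 2 ≤
        Real.exp (-(min ℓ₀ γ) * t) * (‖u 0‖ ^ 2 + (q 0) ^ 2) +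
          (1 / min ℓ₀ γ) * (M ^ 2 / ℓ₀ + γ) * (1 - Real.exp (-(min ℓ₀ γ) * t)) :=
  stmt_3_general A ℓ₀ hℓ₀ hA N hN F M hF γ hγ u u' q q' hu hq hequ heqq
end

section
/- In the mean-reverting-SAV-BDF2 solve, the scalar Bⁿ = 1 + δt² · (3/2 + δt γ)⁻¹ · ⟪[(3/2)I + δt A]⁻¹ N, N⟫ satisfies Bⁿ ≥ 1 whenever A is positive semidefinite self-adjoint, δt > 0, and γ > 0; in particular the scheme's scalar division is well defined. -/
open scoped InnerProductSpace

section RealInnerProductSpace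

variable {E : Type*} [NormedAddCommGroup E] [InnerProductSpace ℝ E]

theorem inner_smul_id_add_smul_apply_self_nonneg {A : E →L[ℝ] E}
    (hA : ∀ x, 0 ≤ ⟪A x, x⟫_ℝ) {a b : ℝ} (ha : 0 ≤ a) (hb : 0 ≤ b) (x : E) :
    0 ≤ ⟪(a • ContinuousLinearMap.id ℝ E + b • A) x, x⟫_ℝ := by
  simp only [add_apply, smul_apply, ContinuousLinearMap.id_apply,
    inner_add_left, real_inner_smul_left]
  have := real_inner_self_nonneg (x := x)
  have := hA x
  positivity

theorem inner_apply_self_nonneg_of_comp_eq_id {T B : E →L[ℝ] E}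
    (hT : ∀ x, 0 ≤ ⟪T x, x⟫_ℝ) (hTB : T ∘L B = ContinuousLinearMap.id ℝ E) (y : E) :
    0 ≤ ⟪B y, y⟫_ℝ := by
  have hy : T (B y) = y := by simpa using congr($hTB y)
  simpa [hy, real_inner_comm] using hT (B y)

end RealInnerProductSpace

theorem stmt_11_general {E : Type*} [NormedAddCommGroup E] [InnerProductSpace ℝ E]
    (A : E →L[ℝ] E)
    (hpos : ∀ x : E, 0 ≤ (inner ℝ (A x) x : ℝ))
    (N : E) (δt γ : ℝ) (hδt : 0 < δt) (hγ : 0 < γ)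
    (B : E →L[ℝ] E)
    (hB : ((3/2 : ℝ) • ContinuousLinearMap.id ℝ E + δt • A) ∘L B = ContinuousLinearMap.id ℝ E) :
    1 ≤ 1 + δt ^ 2 * (3/2 + δt * γ)⁻¹ * (inner ℝ (B N) N : ℝ) := by
  have hBN : 0 ≤ ⟪B N, N⟫_ℝ := inner_apply_self_nonneg_of_comp_eq_id
    (inner_smul_id_add_smul_apply_self_nonneg hpos (by norm_num) hδt.le) hB N
  have hcoeff : 0 ≤ δt ^ 2 * (3/2 + δt * γ)⁻¹ := by positivity
  exact le_add_of_nonneg_right (mul_nonneg hcoeff hBN)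

theorem stmt_11 {E : Type*} [NormedAddCommGroup E] [InnerProductSpace ℝ E]
    [FiniteDimensional ℝ E]
    (A : E →L[ℝ] E)
    (hsa : ∀ x y : E, (inner ℝ (A x) y : ℝ) = (inner ℝ x (A y) : ℝ))
    (hpos : ∀ x : E, 0 ≤ (inner ℝ (A x) x : ℝ))
    (N : E) (δt γ : ℝ) (hδt : 0 < δt) (hγ : 0 < γ)
    (B : E →L[ℝ] E)
    (hB : ((3/2 : ℝ) • ContinuousLinearMap.id ℝ E + δt • A) ∘L B = ContinuousLinearMap.id ℝ E)
    (hB' : B ∘L ((3/2 : ℝ) • ContinuousLinearMap.id ℝ E + δt • A) = ContinuousLinearMap.id ℝ E) :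
    1 ≤ 1 + δt ^ 2 * (3/2 + δt * γ)⁻¹ * (inner ℝ (B N) N : ℝ) :=
  stmt_11_general A hpos N δt γ hδt hγ B hB
end

section
/- Let E be a finite-dimensional inner product space, A : E →L[ℝ] E, N : E → E, F ∈ E, γ > 0, δt > 0 with (3/2)I + δt·A invertible. Then (uⁿ⁺¹, qⁿ⁺¹) defined by the explicit formulas qⁿ⁺¹ = (1/Bⁿ)(3/2 + δtγ)⁻¹[(4qⁿ - qⁿ⁻¹)/2 + δtγ + δt ⟪N(2uⁿ - uⁿ⁻¹), ((3/2)I + δtA)⁻¹((4uⁿ - uⁿ⁻¹)/2 + δt F)⟫] and uⁿ⁺¹ = ((3/2)I + δtA)⁻¹[(4uⁿ - uⁿ⁻¹)/2 - δt qⁿ⁺¹ N(2uⁿ - uⁿ⁻¹) + δt F], with Bⁿ = 1 + δt²(3/2 + δtγ)⁻¹⟪((3/2)I + δtA)⁻¹N(2uⁿ-uⁿ⁻¹), N(2uⁿ-uⁿ⁻¹)⟫, satisfy the coupled implicit scheme (3uⁿ⁺¹ - 4uⁿ + uⁿ⁻¹)/(2δt) + Auⁿ⁺¹ + qⁿ⁺¹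 N(2uⁿ - uⁿ⁻¹) = F and (3qⁿ⁺¹ - 4qⁿ + qⁿ⁻¹)/(2δt) + γqⁿ⁺¹ - ⟪N(2uⁿ - uⁿ⁻¹), uⁿ⁺¹⟫ = γ, provided Bⁿ ≠ 0. -/
/-!
Since `B` inverts `T = (3/2) I + δt A`, the `u`-equation of the scheme is `T uⁿ⁺¹ = g - δt qⁿ⁺¹ v`
with `v = N(2uⁿ - uⁿ⁻¹)` and `g = (4uⁿ - uⁿ⁻¹)/2 + δt F`, so `uⁿ⁺¹ = B g - δt qⁿ⁺¹ B v`.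
Substituting this into the `q`-equation leaves a scalar linear equation for `qⁿ⁺¹` whose coefficient
is `(3/2 + δt γ) Bⁿ`; the explicit formula for `qⁿ⁺¹` is its solution.
-/

theorem bdf2_eq_of_smul_add_smul_eq {E : Type*} [AddCommGroup E] [Module ℝ E]
    {δt q : ℝ} {u a un unm v F : E} (hδt : δt ≠ 0)
    (h : (3/2 : ℝ) • u + δt • a = (1/2 : ℝ) • ((4 : ℝ) • un - unm) - (δt * q) • v + δt • F) :
    (1 / (2 * δt)) • ((3 : ℝ) • u - (4 : ℝ) • un + unm) + a + q • v = F := by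
  have h' := congrArg (δt⁻¹ • ·) h
  simp only [smul_add, smul_sub, smul_smul, inv_mul_cancel₀ hδt, one_smul,
    inv_mul_cancel_left₀ hδt] at h'
  linear_combination (norm := module) h'

theorem ContinuousLinearMap.smul_add_smul_apply_of_comp_eq_id {E : Type*} [NormedAddCommGroup E]
    [NormedSpace ℝ E] {A T B : E →L[ℝ] E} {c δt : ℝ}
    (hT : T = c • ContinuousLinearMap.id ℝ E + δt • A) (hTB : T ∘L B = ContinuousLinearMap.id ℝ E)
    (w : E) : c • B w + δt • A (B w) = w := by
  simpa [hT] using congrArg (· w) hTB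

theorem sav_eq_of_eq_apply_sub_smul {E : Type*} [NormedAddCommGroup E] [InnerProductSpace ℝ E]
    {B : E →L[ℝ] E} {v g u : E} {γ δt qn qnm q Bn : ℝ} (hδt : δt ≠ 0)
    (hc : 3/2 + δt * γ ≠ 0)
    (hBn : Bn = 1 + δt ^ 2 * (3/2 + δt * γ)⁻¹ * inner ℝ (B v) v) (hBn0 : Bn ≠ 0)
    (hq : q = (1 / Bn) * (3/2 + δt * γ)⁻¹ *
      ((4 * qn - qnm) / 2 + δt * γ + δt * inner ℝ v (B g)))
    (hu : u = B (g - (δt * q) • v)) :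
    (3 * q - 4 * qn + qnm) / (2 * δt) + γ * q - inner ℝ v u = γ := by
  have hinner : inner ℝ v u = inner ℝ v (B g) - δt * q * inner ℝ (B v) v := by
    rw [hu, map_sub, map_smul, inner_sub_right, real_inner_smul_right, real_inner_comm (B v) v]
  set c := 3/2 + δt * γ with hc_def
  have hlin : q * (c + δt ^ 2 * inner ℝ (B v) v) =
      (4 * qn - qnm) / 2 + δt * γ + δt * inner ℝ v (B g) := by
    have hcBn : Bn * c = c + δt ^ 2 * inner ℝ (B v) v := by rw [hBn]; field_simp
    rw [← hcBn, hq]; field_simp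
  rw [hinner]
  field_simp
  linear_combination 2 * hlin - 2 * q * hc_def

theorem stmt_12_general {E : Type*} [NormedAddCommGroup E] [InnerProductSpace ℝ E]
    (A : E →L[ℝ] E) (N : E → E) (F : E) (γ δt : ℝ) (hγ : 0 < γ) (hδt : 0 < δt)
    (T B : E →L[ℝ] E)
    (hT : T = (3/2 : ℝ) • ContinuousLinearMap.id ℝ E + δt • A)
    (hTB : T ∘L B = ContinuousLinearMap.id ℝ E)
    (un unm : E) (qn qnm : ℝ)
    (Bn : ℝ)
    (hBn : Bn = 1 + δt ^ 2 * (3/2 + δt * γ)⁻¹ *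
      (inner ℝ (B (N ((2 : ℝ) • un - unm))) (N ((2 : ℝ) • un - unm)) : ℝ))
    (hBn0 : Bn ≠ 0)
    (qnew : ℝ)
    (hq : qnew = (1 / Bn) * (3/2 + δt * γ)⁻¹ *
      ((4 * qn - qnm) / 2 + δt * γ +
        δt * (inner ℝ (N ((2 : ℝ) • un - unm))
          (B ((1/2 : ℝ) • ((4 : ℝ) • un - unm) + δt • F)) : ℝ)))
    (unew : E)
    (hu : unew = B ((1/2 : ℝ) • ((4 : ℝ) • un - unm)
      - (δt * qnew) • N ((2 : ℝ) • un - unm) + δt • F)) :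
    (1 / (2 * δt)) • ((3 : ℝ) • unew - (4 : ℝ) • un + unm) + A unew
        + qnew • N ((2 : ℝ) • un - unm) = F ∧
    (3 * qnew - 4 * qn + qnm) / (2 * δt) + γ * qnew
        - (inner ℝ (N ((2 : ℝ) • un - unm)) unew : ℝ) = γ := by
  have hsolve := ContinuousLinearMap.smul_add_smul_apply_of_comp_eq_id hT hTB
    ((1/2 : ℝ) • ((4 : ℝ) • un - unm) - (δt * qnew) • N ((2 : ℝ) • un - unm) + δt • F)
  refine ⟨bdf2_eq_of_smul_add_smul_eq hδt.ne' (hu ▸ hsolve),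
    sav_eq_of_eq_apply_sub_smul hδt.ne' (by positivity) hBn hBn0 hq ?_⟩
  rw [hu, sub_add_eq_add_sub]

theorem stmt_12 {E : Type*} [NormedAddCommGroup E] [InnerProductSpace ℝ E]
    [FiniteDimensional ℝ E]
    (A : E →L[ℝ] E) (N : E → E) (F : E) (γ δt : ℝ) (hγ : 0 < γ) (hδt : 0 < δt)
    (T B : E →L[ℝ] E)
    (hT : T = (3/2 : ℝ) • ContinuousLinearMap.id ℝ E + δt • A)
    (hTB : T ∘L B = ContinuousLinearMap.id ℝ E)
    (hBT : B ∘L T = ContinuousLinearMap.id ℝ E)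
    (un unm : E) (qn qnm : ℝ)
    (Bn : ℝ)
    (hBn : Bn = 1 + δt ^ 2 * (3/2 + δt * γ)⁻¹ *
      (inner ℝ (B (N ((2 : ℝ) • un - unm))) (N ((2 : ℝ) • un - unm)) : ℝ))
    (hBn0 : Bn ≠ 0)
    (qnew : ℝ)
    (hq : qnew = (1 / Bn) * (3/2 + δt * γ)⁻¹ *
      ((4 * qn - qnm) / 2 + δt * γ +
        δt * (inner ℝ (N ((2 : ℝ) • un - unm))
          (B ((1/2 : ℝ) • ((4 : ℝ) • un - unm) + δt • F)) : ℝ)))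
    (unew : E)
    (hu : unew = B ((1/2 : ℝ) • ((4 : ℝ) • un - unm)
      - (δt * qnew) • N ((2 : ℝ) • un - unm) + δt • F)) :
    (1 / (2 * δt)) • ((3 : ℝ) • unew - (4 : ℝ) • un + unm) + A unew
        + qnew • N ((2 : ℝ) • un - unm) = F ∧
    (3 * qnew - 4 * qn + qnm) / (2 * δt) + γ * qnew
        - (inner ℝ (N ((2 : ℝ) • un - unm)) unew : ℝ) = γ :=
  stmt_12_general A N F γ δt hγ hδt T B hT hTB un unm qn qnm Bn hBn hBn0 qnew hq unew hu
end

section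
/- Let E be a finite-dimensional normed space and S(t) a continuous semigroup with global attractor 𝒜 (compact, invariant, attracting bounded sets). Let {A_k} be a family of nonempty sets contained in a fixed bounded set B, each A_k invariant under a discrete map S_k, and suppose sup over x ∈ A_k of dist(S_kⁿ x, S(nk) x) ≤ C(T)k whenever nk ≤ T. Then dist(A_k, 𝒜) → 0 as k → 0, where dist denotes the Hausdorff semidistance sup_{a ∈ A_k} inf_{b ∈ 𝒜} ‖a - b‖. -/
lemma iter_image_eq {E : Type*} {f : E → E} {A : Set E} (h : f '' A = A) :
    ∀ n : ℕ, f^[n] '' A = A := by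
  intro n
  induction n with
  | zero => simp
  | succ n ih =>
    rw [Function.iterate_succ, Set.image_comp, h, ih]

theorem stmt_13 {E : Type*} [NormedAddCommGroup E] [NormedSpace ℝ E]
    [FiniteDimensional ℝ E]
    (S : ℝ → E → E) (𝒜 : Set E) (h𝒜ne : 𝒜.Nonempty) (h𝒜c : IsCompact 𝒜)
    (hScont : ∀ t : ℝ, 0 ≤ t → Continuous (S t))
    (h𝒜inv : ∀ t : ℝ, 0 ≤ t → S t '' 𝒜 = 𝒜)
    (hattr : ∀ ε > (0 : ℝ), ∀ B : Set E, Bornology.IsBounded B →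
      ∃ T : ℝ, ∀ t ≥ T, ∀ x ∈ B, ∃ a ∈ 𝒜, ‖S t x - a‖ ≤ ε)
    (K : Set E) (hK : Bornology.IsBounded K)
    (Ak : ℝ → Set E) (Sk : ℝ → E → E)
    (hAkne : ∀ k > (0 : ℝ), (Ak k).Nonempty)
    (hAkB : ∀ k > (0 : ℝ), Ak k ⊆ K)
    (hAkinv : ∀ k > (0 : ℝ), Sk k '' Ak k = Ak k)
    (C : ℝ → ℝ)
    (herr : ∀ T > (0 : ℝ), ∀ k > (0 : ℝ), ∀ n : ℕ, (n : ℝ) * k ≤ T →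
      ∀ x ∈ Ak k, ‖(Sk k)^[n] x - S ((n : ℝ) * k) x‖ ≤ C T * k) :
    Filter.Tendsto (fun k : ℝ => sSup ((fun a => sInf ((fun b => ‖a - b‖) '' 𝒜)) '' (Ak k)))
      (nhdsWithin 0 (Set.Ioi 0)) (nhds 0) := by
  rw [Metric.tendsto_nhdsWithin_nhds]
  intro ε hε
  obtain ⟨T, hT⟩ := hattr (ε / 3) (by linarith) K hK
  set T₀ := max T 1 with hT₀def
  have hT₀pos : (0 : ℝ) < T₀ := lt_of_lt_of_le one_pos (le_max_right _ _)
  set T' := T₀ + 1 with hT'def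
  have hT'pos : 0 < T' := by positivity
  set δ := min 1 (ε / (3 * (|C T'| + 1))) with hδdef
  have hδpos : 0 < δ := lt_min one_pos (by positivity)
  refine ⟨δ, hδpos, ?_⟩
  intro k hk hdk
  have hk0 : 0 < k := hk
  have hkd : k < δ := by rwa [Real.dist_eq, sub_zero, abs_of_pos hk0] at hdk
  have hk1 : k ≤ 1 := le_of_lt (lt_of_lt_of_le hkd (min_le_left _ _))
  have hkε : C T' * k ≤ ε / 3 := by
    have h1 : C T' * k ≤ (|C T'| + 1) * k := by
      have := le_abs_self (C T')
      nlinarith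
    have h2 : k ≤ ε / (3 * (|C T'| + 1)) :=
      le_of_lt (lt_of_lt_of_le hkd (min_le_right _ _))
    have h3 : (|C T'| + 1) * k ≤ (|C T'| + 1) * (ε / (3 * (|C T'| + 1))) :=
      mul_le_mul_of_nonneg_left h2 (by positivity)
    have habs : (0:ℝ) < |C T'| + 1 := by positivity
    have h4 : (|C T'| + 1) * (ε / (3 * (|C T'| + 1))) = ε / 3 := by
      field_simp
    linarith
  set n := ⌈T₀ / k⌉₊ with hndef
  have hnk_ge : T₀ ≤ (n : ℝ) * k := by
    rw [← div_le_iff₀ hk0]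
    exact Nat.le_ceil _
  have hnk_le : (n : ℝ) * k ≤ T' := by
    have h1 : (n : ℝ) < T₀ / k + 1 := Nat.ceil_lt_add_one (by positivity)
    have h2 : (n : ℝ) * k < (T₀ / k + 1) * k := by
      exact mul_lt_mul_of_pos_right h1 hk0
    have h3 : (T₀ / k + 1) * k = T₀ + k := by field_simp
    rw [h3] at h2
    linarith
  have key' : ∀ a ∈ Ak k, sInf ((fun b => ‖a - b‖) '' 𝒜) ≤ 2 * ε / 3 := by
    intro a ha
    have hinv := iter_image_eq (hAkinv k hk0) n
    rw [← hinv] at ha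
    obtain ⟨x, hx, hxa⟩ := ha
    have herr' := herr T' hT'pos k hk0 n hnk_le x hx
    obtain ⟨b, hb𝒜, hb⟩ := hT ((n : ℝ) * k)
      (le_trans (le_max_left _ _) hnk_ge) x (hAkB k hk0 hx)
    have := norm_sub_le_norm_sub_add_norm_sub a (S ((n : ℝ) * k) x) b
    rw [hxa] at herr'
    have hab : ‖a - b‖ ≤ 2 * ε / 3 := by linarith
    exact le_trans (csInf_le ⟨0, by rintro _ ⟨b', _, rfl⟩; exact norm_nonneg _⟩ ⟨b, hb𝒜, rfl⟩) hab
  have hs_nonneg : 0 ≤ sSup ((fun a => sInf ((fun b => ‖a - b‖) '' 𝒜)) '' (Ak k)) :=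
    Real.sSup_nonneg (by
      rintro _ ⟨a, ha, rfl⟩
      exact Real.sInf_nonneg (by rintro _ ⟨b, _, rfl⟩; exact norm_nonneg _))
  have hs_le : sSup ((fun a => sInf ((fun b => ‖a - b‖) '' 𝒜)) '' (Ak k)) ≤ 2 * ε / 3 :=
    Real.sSup_le (by rintro _ ⟨a, ha, rfl⟩; exact key' a ha) (by linarith)
  rw [Real.dist_eq, sub_zero, abs_of_nonneg hs_nonneg]
  linarith
end
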